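/- The minimum DFA recognizing L_UNIQ over an alphabet of size n ≥ 1 has at least 2^{n-1} states; equivalently, there exist 2^{n-1} pairwise Myhill–Nerode-inequivalent strings with respect to L_UNIQ. -/

import Mathlib

variable {α : Type*}

/-- The `$`-delimited version of a string over `α`; `none` plays the role of `$`. -/
def delim (w : List α) : List (Option α) :=
  none :: (w.map some ++ [none])

/-- The bigram count vector of `$w$`, as the multiset of adjacent ordered pairs
(multiset equality is the same as equality of all bigram counts). -/
def bigrams (w : List α) : Multiset (Option α × Option α) :=
  ((delim w).zip (delim w).tail : List (Option α × Option α))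

/-- A string is uniquely decodable if `$w$` is the only delimited string with its
bigram count vector. -/
def UniqDec (w : List α) : Prop :=
  ∀ v : List α, bigrams v = bigrams w → v = w

/-!
Fix a letter `b` and take the words `b :: s`, where `s` lists a subset of the other letters.
If `a ∈ s` but `a ∉ r`, the suffix `[b, a, a]` separates `b :: s` from `b :: r`. In `b s b a a`
the letter `a` carries two cycles, `a … b a` and the loop `a a`, which can be traversed in either
order without changing the bigrams. In `$ b r b a a $` the walk through the bigram multigraph is
forced: leaving `b` towards `a` first, or `a` towards `$` first, strands edges that can no longer
be reached. A DFA sends such pairwise distinguishable words to distinct states.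
-/

namespace List

variable {β : Type*}

def adjPairs (l : List β) : Multiset (β × β) :=
  (l.zip l.tail : List (β × β))

@[simp] lemma adjPairs_nil : adjPairs ([] : List β) = 0 := rfl

@[simp] lemma adjPairs_singleton (a : β) : adjPairs [a] = 0 := rfl

@[simp] lemma adjPairs_cons_cons (a b : β) (l : List β) :
    adjPairs (a :: b :: l) = (a, b) ::ₘ adjPairs (b :: l) := rfl

lemma adjPairs_append_cons (l₁ : List β) (c : β) (l₂ : List β) :
    adjPairs (l₁ ++ c :: l₂) = adjPairs (l₁ ++ [c]) + adjPairs (c :: l₂) := by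
  induction l₁ with
  | nil => simp
  | cons x l₁ ih =>
    cases l₁ with
    | nil => simp
    | cons y l₁ =>
      simp only [cons_append, adjPairs_cons_cons] at ih ⊢
      rw [ih, Multiset.cons_add]

lemma fst_mem_dropLast_of_mem_adjPairs {l : List β} {p : β × β} (hp : p ∈ adjPairs l) :
    p.1 ∈ l.dropLast := by
  induction l with
  | nil => simp at hp
  | cons x l ih =>
    cases l with
    | nil => simp at hp
    | cons y l =>
      rw [adjPairs_cons_cons, Multiset.mem_cons] at hp
      rcases hp with rfl | hp
      · simp
      · simpa using Or.inr (ih hp)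

lemma snd_eq_head_of_mem_adjPairs_cons {x : β} {m : List β} {y : β} (hx : x ∉ m.dropLast)
    (h : (x, y) ∈ adjPairs (x :: m)) : m.head? = some y := by
  cases m with
  | nil => simp at h
  | cons c m =>
    rw [adjPairs_cons_cons, Multiset.mem_cons] at h
    rcases h with h | h
    · simp_all
    · exact absurd (fst_mem_dropLast_of_mem_adjPairs h) hx

lemma exists_of_adjPairs_cons_eq [DecidableEq β] {x : β} {K : List β}
    (hK : adjPairs (x :: K) ≠ 0) :
    ∃ y K', K = y :: K' ∧ (x, y) ∈ adjPairs (x :: K) ∧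
      adjPairs (y :: K') = (adjPairs (x :: K)).erase (x, y) := by
  cases K with
  | nil => simp at hK
  | cons y K' => exact ⟨y, K', rfl, by simp, by simp⟩

lemma fst_mem_of_adjPairs_closed {S : Set β} {v : β} {K : List β} (hv : v ∈ S)
    (hS : ∀ p ∈ adjPairs (v :: K), p.1 ∈ S → p.2 ∈ S) :
    ∀ p ∈ adjPairs (v :: K), p.1 ∈ S := by
  induction K generalizing v with
  | nil => simp
  | cons y K ih =>
    have hy : y ∈ S := hS (v, y) (by simp) hv
    simp only [adjPairs_cons_cons, Multiset.forall_mem_cons] at hS ⊢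
    exact ⟨hv, ih hy hS.2⟩

lemma eq_zero_of_adjPairs_cons_eq_add {S : Set β} {v : β} {K : List β}
    {Q R : Multiset (β × β)} (hv : v ∈ S) (h : adjPairs (v :: K) = Q + R)
    (hQ : ∀ p ∈ Q, p.1 ∉ S) (hR : ∀ p ∈ R, p.2 ∈ S) :
    Q = 0 := by
  refine Multiset.eq_zero_of_forall_notMem fun p hp => hQ p hp ?_
  refine fst_mem_of_adjPairs_closed hv (fun p hp hp1 => ?_) p
    (h ▸ Multiset.mem_add.mpr (Or.inl hp))
  rw [h, Multiset.mem_add] at hp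
  exact hp.elim (fun hp => absurd hp1 (hQ p hp)) (hR p)

lemma exists_eq_cons_of_adjPairs_eq {x y : β} {K : List β} {Q : Multiset (β × β)}
    (h : adjPairs (x :: K) = (x, y) ::ₘ Q) (hQ : ∀ p ∈ Q, p.1 ≠ x) :
    ∃ K', K = y :: K' ∧ adjPairs (y :: K') = Q := by
  cases K with
  | nil => simp at h
  | cons z K' =>
    rw [adjPairs_cons_cons] at h
    obtain rfl : z = y := by
      have hz : (x, z) ∈ (x, y) ::ₘ Q := h ▸ Multiset.mem_cons_self _ _
      rcases Multiset.mem_cons.mp hz with hz | hz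
      · exact (Prod.mk.inj hz).2
      · exact absurd rfl (hQ _ hz)
    exact ⟨K', rfl, Multiset.cons_inj_right _ |>.mp h⟩

lemma exists_eq_append_of_adjPairs_eq (C : List β) {x y : β} {K M : List β}
    (hC : (x :: C).Nodup) (hCM : Disjoint (x :: C) (y :: M).dropLast)
    (h : adjPairs (x :: K) = adjPairs (x :: (C ++ y :: M))) :
    ∃ K', K = C ++ y :: K' ∧ adjPairs (y :: K') = adjPairs (y :: M) := by
  induction C generalizing x K with
  | nil =>
    refine exists_eq_cons_of_adjPairs_eq h fun p hp hpx => hCM mem_cons_self ?_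
    exact hpx ▸ fst_mem_dropLast_of_mem_adjPairs hp
  | cons c C ih =>
    rw [cons_append, adjPairs_cons_cons] at h
    obtain ⟨K₁, rfl, h₁⟩ := exists_eq_cons_of_adjPairs_eq h fun p hp hpx => by
      have hp' := fst_mem_dropLast_of_mem_adjPairs hp
      rw [hpx, ← cons_append, dropLast_append_of_ne_nil (cons_ne_nil _ _), mem_append] at hp'
      rcases hp' with hp' | hp'
      · exact (nodup_cons.mp hC).1 hp'
      · exact hCM mem_cons_self hp'
    obtain ⟨K', rfl, h'⟩ := ih (nodup_cons.mp hC).2 (disjoint_of_disjoint_cons_left hCM) h₁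
    exact ⟨K', rfl, h'⟩

lemma eq_nil_of_adjPairs_cons_eq_zero {x : β} {K : List β} (h : adjPairs (x :: K) = 0) :
    K = [] := by
  cases K with
  | nil => rfl
  | cons y K => simp at h

lemma adjPairs_swap_cycles (A B C D : List β) (c : β) :
    adjPairs (A ++ c :: (B ++ c :: (C ++ c :: D))) =
      adjPairs (A ++ c :: (C ++ c :: (B ++ c :: D))) := by
  have hcycle : ∀ X Y : List β,
      adjPairs (c :: (X ++ c :: Y)) = adjPairs (c :: X ++ [c]) + adjPairs (c :: Y) :=
    fun X Y => adjPairs_append_cons (c :: X) c Y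
  rw [adjPairs_append_cons A c (B ++ _), adjPairs_append_cons A c (C ++ _),
    hcycle, hcycle, hcycle, hcycle]
  abel

lemma eq_of_adjPairs_cons_eq_loop {a z : β} {K : List β} (hza : z ≠ a)
    (h : adjPairs (a :: K) = adjPairs [a, a, z]) : K = [a, z] := by
  classical
  obtain ⟨y, K₁, rfl, hy, hK₁⟩ := exists_of_adjPairs_cons_eq (x := a) (K := K) (by simp [h])
  rw [h] at hy hK₁
  have hy' : y = a ∨ y = z := by simpa using hy
  rcases hy' with rfl | rfl
  · rw [adjPairs_cons_cons, Multiset.erase_cons_head, adjPairs_cons_cons] at hK₁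
    obtain ⟨K₂, rfl, hK₂⟩ := exists_eq_cons_of_adjPairs_eq hK₁ (by simp)
    simp [eq_nil_of_adjPairs_cons_eq_zero hK₂]
  · rw [adjPairs_cons_cons, adjPairs_cons_cons,
      Multiset.erase_cons_tail _ (by simpa using hza.symm), Multiset.erase_cons_head] at hK₁
    have := eq_zero_of_adjPairs_cons_eq_add (S := {y}) (Q := {(a, a)}) (R := 0) rfl
      (hK₁.trans (by simp)) (by simpa using hza.symm) (by simp)
    simp at this

lemma eq_of_adjPairs_cons_eq_cycle_loop {x a z : β} {l K : List β}
    (hl : (l ++ [x]).Nodup) (ha : a ∉ l ++ [x]) (hz : z ∉ l ++ [x]) (hza : z ≠ a)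
    (h : adjPairs (x :: K) = adjPairs (x :: (l ++ x :: [a, a, z]))) : K = l ++ x :: [a, a, z] := by
  classical
  obtain ⟨c, C, hcC⟩ :=
    exists_cons_of_ne_nil (append_ne_nil_of_right_ne_nil l (cons_ne_nil x []))
  have hT : l ++ x :: [a, a, z] = c :: (C ++ [a, a, z]) := by
    rw [← cons_append, ← hcC]; simp
  have hP : adjPairs (x :: (l ++ x :: [a, a, z]))
      = adjPairs (x :: c :: C) + (x, a) ::ₘ (a, a) ::ₘ {(a, z)} := by
    rw [← cons_append, adjPairs_append_cons, cons_append, hcC]; rfl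
  obtain ⟨y, K₁, rfl, hy, hK₁⟩ :=
    exists_of_adjPairs_cons_eq (x := x) (K := K) (by simp [h, hP])
  rw [h] at hy hK₁
  -- Leaving `x` towards `a` first strands the cycle: from `a` only `a` and `z` are reachable.
  have hya : y ≠ a := by
    rintro rfl
    rw [hP, Multiset.erase_add_right_pos _ (by simp), Multiset.erase_cons_head] at hK₁
    refine (by simp : adjPairs (x :: c :: C) ≠ 0) (eq_zero_of_adjPairs_cons_eq_add (S := {y, z})
      (by simp) hK₁ (fun p hp => ?_) (by simp))
    have hp1 := fst_mem_dropLast_of_mem_adjPairs hp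
    rw [← hcC, ← cons_append, dropLast_concat] at hp1
    replace hp1 : p.1 ∈ l ++ [x] := by simpa [or_comm] using hp1
    rintro (hpa | hpz)
    · exact ha (hpa ▸ hp1)
    · exact hz (hpz ▸ hp1)
  have hyc : y = c := by
    rw [hP, Multiset.mem_add] at hy
    rcases hy with hy | hy
    · have hxl : x ∉ l := ((nodup_concat l x).mp (by rwa [concat_eq_append])).1
      simpa using (snd_eq_head_of_mem_adjPairs_cons (by rwa [← hcC, dropLast_concat]) hy).symm
    · simp only [Multiset.mem_cons, Prod.mk.injEq, hya, and_false,
        Multiset.mem_singleton, false_or] at hy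
      exact absurd (by rw [← hy.1]; exact mem_concat_self) ha
  subst hyc
  rw [hT, adjPairs_cons_cons, Multiset.erase_cons_head] at hK₁
  obtain ⟨K₂, rfl, hK₂⟩ :=
    exists_eq_append_of_adjPairs_eq C (hcC ▸ hl) (by simpa [← hcC] using ha) hK₁
  rw [hT, eq_of_adjPairs_cons_eq_loop hza hK₂]

end List

open List

lemma bigrams_eq_adjPairs_delim (w : List α) : bigrams w = adjPairs (delim w) := rfl

lemma not_uniqDec_cons_append {b a : α} {p q : List α} (hab : a ≠ b) (haq : a ∉ q) :
    ¬ UniqDec (b :: p ++ a :: q ++ [b, a, a]) := by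
  intro h
  have hbig :
      bigrams (b :: p ++ a :: a :: q ++ [b, a]) = bigrams (b :: p ++ a :: q ++ [b, a, a]) := by
    have := adjPairs_swap_cycles (none :: some b :: p.map some) [] (q.map some ++ [some b])
      [none] (some a)
    simpa [bigrams_eq_adjPairs_delim, delim] using this
  have hne := h _ hbig
  simp only [cons_append, append_assoc, cons.injEq, append_cancel_left_eq, true_and] at hne
  cases q with
  | nil => simp [hab] at hne
  | cons c q => simp_all

lemma uniqDec_cons_append {b a : α} {l : List α} (hl : l.Nodup) (hbl : b ∉ l) (hal : a ∉ l)
    (hab : a ≠ b) : UniqDec (b :: l ++ [b, a, a]) := by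
  intro w hw
  have hdelim : delim (b :: l ++ [b, a, a])
      = none :: some b :: (l.map some ++ some b :: [some a, some a, none]) := by simp [delim]
  rw [bigrams_eq_adjPairs_delim, bigrams_eq_adjPairs_delim, hdelim, delim] at hw
  obtain ⟨K, hK, hpairs⟩ := exists_eq_append_of_adjPairs_eq [] (nodup_singleton none)
    (by rw [← cons_append, dropLast_append_cons]; simp) hw
  have hlb : (l ++ [b]).Nodup := by simpa using (nodup_concat l b).mpr ⟨hbl, hl⟩
  have hK' := eq_of_adjPairs_cons_eq_cycle_loop (by simpa using hlb.map (Option.some_injective α))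
    (by simp [hal, hab]) (by simp) (by simp) hpairs
  have hw' : w.map some ++ [none] = (b :: l ++ [b, a, a]).map some ++ [none] := by simp [hK, hK']
  exact map_injective_iff.mpr (Option.some_injective α) (append_cancel_right hw')

lemma uniqDec_cons_append_iff {b a : α} {l : List α} (hl : l.Nodup) (hbl : b ∉ l)
    (hab : a ≠ b) :
    UniqDec (b :: l ++ [b, a, a]) ↔ a ∉ l := by
  refine ⟨fun h hal => ?_, (uniqDec_cons_append hl hbl · hab)⟩
  obtain ⟨p, q, rfl⟩ := append_of_mem hal
  exact not_uniqDec_cons_append hab (nodup_cons.mp hl.of_append_right).1 h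

theorem DFA.card_le_of_distinguishes {σ : Type*} [Fintype σ] (M : DFA α σ)
    (D : Finset (List α))
    (hD : ∀ u ∈ D, ∀ v ∈ D, u ≠ v → ∃ t, ¬(u ++ t ∈ M.accepts ↔ v ++ t ∈ M.accepts)) :
    D.card ≤ Fintype.card σ := by
  refine Finset.card_le_card_of_injOn M.eval (fun _ _ => Finset.mem_univ _)
    fun u hu v hv huv => ?_
  by_contra hne
  obtain ⟨t, ht⟩ := hD u hu v hv hne
  have hquot := congrArg M.acceptsFrom huv
  rw [← Language.leftQuotient_accepts_apply, ← Language.leftQuotient_accepts_apply] at hquot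
  exact ht (by rw [← Language.mem_leftQuotient, ← Language.mem_leftQuotient, hquot])

section subsetWords

variable [Fintype α] [DecidableEq α]

noncomputable def subsetWords (b : α) : Finset (List α) :=
  (Finset.univ.erase b).powerset.image fun s => b :: s.toList

lemma card_subsetWords (b : α) : (subsetWords b).card = 2 ^ (Fintype.card α - 1) := by
  rw [subsetWords, Finset.card_image_of_injective, Finset.card_powerset,
    Finset.card_erase_of_mem (Finset.mem_univ b), Finset.card_univ]
  intro s r hsr
  simpa using congrArg toFinset (cons.inj hsr).2

lemma subsetWords_distinguishable (b : α) :
    ∀ u ∈ subsetWords b, ∀ v ∈ subsetWords b, u ≠ v →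
      ∃ t, ¬(UniqDec (u ++ t) ↔ UniqDec (v ++ t)) := by
  simp only [subsetWords, Finset.mem_image, Finset.mem_powerset]
  rintro _ ⟨s, hs, rfl⟩ _ ⟨r, hr, rfl⟩ hsr
  obtain ⟨a, ha⟩ : ∃ a, ¬(a ∈ s ↔ a ∈ r) := by
    by_contra! h
    exact hsr (by rw [Finset.ext h])
  have hbs : b ∉ s := fun h => by simpa using hs h
  have hbr : b ∉ r := fun h => by simpa using hr h
  have hab : a ≠ b := by
    rintro rfl
    exact ha (iff_of_false hbs hbr)
  refine ⟨[b, a, a], ?_⟩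
  rw [uniqDec_cons_append_iff s.nodup_toList (by simpa using hbs) hab,
    uniqDec_cons_append_iff r.nodup_toList (by simpa using hbr) hab,
    Finset.mem_toList, Finset.mem_toList]
  tauto

end subsetWords

theorem stmt17_general {α : Type} [Fintype α] (n : ℕ)
    (hcard : Fintype.card α = n) (hn : 1 ≤ n) :
    (∀ (Q : Type) (_ : Fintype Q) (M : DFA α Q),
        M.accepts = {w : List α | UniqDec w} → 2 ^ (n - 1) ≤ Fintype.card Q) ∧
    ∃ D : Finset (List α), D.card = 2 ^ (n - 1) ∧
      ∀ u ∈ D, ∀ v ∈ D, u ≠ v →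
        ∃ t : List α, ¬ (UniqDec (u ++ t) ↔ UniqDec (v ++ t)) := by
  classical
  obtain ⟨b⟩ : Nonempty α := Fintype.card_pos_iff.mp (by omega)
  have hD := card_subsetWords b
  rw [hcard] at hD
  refine ⟨fun Q _ M hM => hD ▸ M.card_le_of_distinguishes _ fun u hu v hv huv => ?_,
    _, hD, subsetWords_distinguishable b⟩
  rw [hM]
  exact subsetWords_distinguishable b u hu v hv huv

/-- Any DFA recognizing `L_UNIQ` over an alphabet of size `n ≥ 1` has at least
`2^(n-1)` states; equivalently there are `2^(n-1)` pairwise Myhill–Nerode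
inequivalent strings with respect to `L_UNIQ`. -/
theorem stmt17 {α : Type} [Fintype α] [LinearOrder α] (n : ℕ)
    (hcard : Fintype.card α = n) (hn : 1 ≤ n) :
    (∀ (Q : Type) (_ : Fintype Q) (M : DFA α Q),
        M.accepts = {w : List α | UniqDec w} → 2 ^ (n - 1) ≤ Fintype.card Q) ∧
    ∃ D : Finset (List α), D.card = 2 ^ (n - 1) ∧
      ∀ u ∈ D, ∀ v ∈ D, u ≠ v →
        ∃ t : List α, ¬ (UniqDec (u ++ t) ↔ UniqDec (v ++ t)) :=
  stmt17_general n hcard hn
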